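/- Let q ∈ ℝ and let u ∈ C¹(ℝ) be q-symmetric in the sense that u(-x) = (B_q u)(x) for all x, where B_q u = u - i P₁₂ and P solves P_x = (Q - i[σ,P])P - PQ, P(0) = -iqσ₃, Q = [[0,u],[-conj(u),0]]. Then u satisfies the Robin boundary condition u'(0) + q u(0) = 0. -/

import Mathlib

open Matrix Complex

attribute [local instance] Matrix.normedAddCommGroup Matrix.normedSpace

noncomputable def sigma3 : Matrix (Fin 2) (Fin 2) ℂ := !![1, 0; 0, -1]

noncomputable def sigmaM : Matrix (Fin 2) (Fin 2) ℂ := (1/2 : ℂ) • sigma3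

noncomputable def Qmat (u : ℝ → ℂ) (x : ℝ) : Matrix (Fin 2) (Fin 2) ℂ :=
  !![0, u x; -(starRingEnd ℂ) (u x), 0]

/-!
Differentiate the symmetry relation `u(-x) = u(x) - i P₁₂(x)` at `x = 0`:
`-u'(0) = u'(0) - i P'₁₂(0)`. Since `P(0) = -iqσ₃` commutes with `σ`, the
commutator term of the equation for `P` vanishes at `0`, so
`P'(0) = -iq (Q(0)σ₃ - σ₃Q(0))`, whose `(1,2)` entry is `2iq u(0)`.
-/

theorem HasDerivAt.neg_eq_of_comp_neg_eq {𝕜 F : Type*} [NontriviallyNormedField 𝕜]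
    [NormedAddCommGroup F] [NormedSpace 𝕜 F] {f g : 𝕜 → F} {f' g' : F}
    (hf : HasDerivAt f f' 0) (hg : HasDerivAt g g' 0) (hfg : ∀ x, f (-x) = g x) :
    -f' = g' := by
  have hf_neg : HasDerivAt (fun x => f (-x)) (-f') 0 := by
    rw [← neg_zero] at hf
    simpa [Function.comp_def] using hf.scomp (0 : 𝕜) (hasDerivAt_neg 0)
  exact hf_neg.unique (funext hfg ▸ hg)

theorem HasDerivAt.matrix_apply {𝕜 E m n : Type*} [NontriviallyNormedField 𝕜]
    [NormedAddCommGroup E] [NormedSpace 𝕜 E] [Fintype m] [Fintype n]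
    {P : 𝕜 → Matrix m n E} {P' : Matrix m n E} {x : 𝕜} (hP : HasDerivAt P P' x)
    (i : m) (j : n) : HasDerivAt (fun y => P y i j) (P' i j) x :=
  hasDerivAt_pi.mp (hasDerivAt_pi.mp hP i) j

theorem sigmaM_commute_sigma3 : Commute sigmaM sigma3 :=
  (Commute.refl sigma3).smul_left _

theorem ode_rhs_smul_sigma3 (M : Matrix (Fin 2) (Fin 2) ℂ) (c : ℂ) :
    (M - I • (sigmaM * c • sigma3 - c • sigma3 * sigmaM)) * c • sigma3 - c • sigma3 * M
      = c • (M * sigma3 - sigma3 * M) := by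
  rw [((sigmaM_commute_sigma3.smul_right c).eq : _ = _), sub_self, smul_zero, sub_zero,
    mul_smul_comm, smul_mul_assoc, smul_sub]

theorem Qmat_mul_sigma3_sub_apply (u : ℝ → ℂ) (x : ℝ) :
    (Qmat u x * sigma3 - sigma3 * Qmat u x) 0 1 = -2 * u x := by
  simp [Qmat, sigma3]
  ring

/-- If `u ∈ C¹(ℝ)` is `q`-symmetric, i.e. `u(-x) = (B_q u)(x) = u(x) - i P₁₂(x)`
where `P` solves `P_x = (Q - i[σ,P])P - PQ`, `P(0) = -iqσ₃`, then `u` satisfies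
the Robin boundary condition `u'(0) + q u(0) = 0`. -/
theorem robin_bc_of_q_symmetric (q : ℝ) (u u' : ℝ → ℂ)
    (hu : ∀ x : ℝ, HasDerivAt u (u' x) x)
    (P P' : ℝ → Matrix (Fin 2) (Fin 2) ℂ)
    (hP : ∀ x : ℝ, HasDerivAt P (P' x) x)
    (hODE : ∀ x : ℝ,
      P' x = (Qmat u x - Complex.I • (sigmaM * P x - P x * sigmaM)) * P x
        - P x * Qmat u x)
    (hP0 : P 0 = (-(Complex.I * (q : ℂ))) • sigma3)
    (hsym : ∀ x : ℝ, u (-x) = u x - Complex.I * P x 0 1) :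
    u' 0 + (q : ℂ) * u 0 = 0 := by
  have hderiv : -u' 0 = u' 0 - I * P' 0 0 1 :=
    (hu 0).neg_eq_of_comp_neg_eq ((hu 0).sub (((hP 0).matrix_apply 0 1).const_mul I)) hsym
  have hP'0 : P' 0 0 1 = 2 * I * q * u 0 := by
    rw [hODE, hP0, ode_rhs_smul_sigma3, Matrix.smul_apply, Qmat_mul_sigma3_sub_apply, smul_eq_mul]
    ring
  rw [hP'0] at hderiv
  linear_combination (-1 / 2 : ℂ) * hderiv + (q : ℂ) * u 0 * I_sq
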